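/- arXiv:1511.02427 — 7 statements merged into one kernel-verified Lean document; each statement's English description precedes it below -/
import Mathlib

section
/- Let G be a finite D-quasirandom group and S a symmetric subset of G not containing the identity. Then the chromatic number of the Cayley graph Cay(G,S) satisfies χ(Cay(G,S)) ≥ √(D·|S|/|G|). -/
/-- The Cayley graph of a group `G` with respect to a set `S`: vertices `x, y`
are adjacent iff `x ≠ y` and `x⁻¹ * y ∈ S` (symmetrized). When `S` is symmetric
and does not contain the identity, this is exactly `x ~ y ↔ x⁻¹ * y ∈ S`. -/
def cayleyGraph {G : Type*} [Group G] (S : Set G) : SimpleGraph G :=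
  SimpleGraph.fromRel (fun x y => x⁻¹ * y ∈ S)

/-!
Let `T` be the adjacency operator of `Cay(G,S)` on `ℓ²(G)`: it is self-adjoint, multiplies the
constants by `|S|`, and commutes with left translations. If `μ` is an eigenvalue of `T` on the
functions of mean zero, the eigenfunctions of mean zero form a subrepresentation of the left
regular representation without invariant vectors, so their dimension is at least `D`. Bessel's
inequality bounds `dim · μ²` by the Hilbert–Schmidt norm `∑ₓ ‖T δₓ‖² = |G| |S|`, hence
`μ ≥ -λ` with `λ = √(|G| |S| / D)`. Hoffman's argument, applied to the centred indicator of a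
colour class `A`, gives `|S| |A| ≤ λ (|G| - |A|)`; summing over the colour classes gives
`|S| ≤ λ (χ - 1)`, and `|S| / λ = √(D |S| / |G|)`.
-/

open Module InnerProductSpace Finset

def IsQuasirandom (G : Type*) [Group G] (D : ℕ) : Prop :=
  ∀ (V : Type) [AddCommGroup V] [Module ℂ V] [FiniteDimensional ℂ V]
    (ρ : Representation ℂ G V),
    (∃ g : G, ρ g ≠ LinearMap.id) →
    (∀ W : Submodule ℂ V, (∀ g : G, W.map (ρ g) ≤ W) → W = ⊥ ∨ W = ⊤) →
    D ≤ finrank ℂ V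

namespace IsQuasirandom

variable {G : Type*} [Group G] {D : ℕ} {V : Type*} [AddCommGroup V] [Module ℂ V]
  [FiniteDimensional ℂ V]

/-- `IsQuasirandom` only speaks about representations on spaces in `Type`; a basis transports
any finite-dimensional representation to one on `Fin n → ℂ`. -/
theorem le_finrank (hG : IsQuasirandom G D) (ρ : Representation ℂ G V)
    (hρ : ∃ g, ρ g ≠ LinearMap.id)
    (hirr : ∀ W : Submodule ℂ V, (∀ g, W.map (ρ g) ≤ W) → W = ⊥ ∨ W = ⊤) :
    D ≤ finrank ℂ V := by
  let e := (finBasis ℂ V).equivFun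
  let ρ' : Representation ℂ G (Fin (finrank ℂ V) → ℂ) :=
    (e.conjAlgEquiv ℂ : Module.End ℂ V →* Module.End ℂ _).comp ρ
  have hρ' : ∀ g, ρ' g = e.conj (ρ g) := fun _ => rfl
  rw [← finrank_fin_fun ℂ (n := finrank ℂ V)]
  refine hG _ ρ' ?_ fun W hW => ?_
  · obtain ⟨g, hg⟩ := hρ
    exact ⟨g, by rwa [hρ', ← e.conj_id, Ne, e.conj.injective.eq_iff]⟩
  · have hinv : ∀ g, (W.comap e.toLinearMap).map (ρ g) ≤ W.comap e.toLinearMap := by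
      rintro g _ ⟨v, hv, rfl⟩
      simpa [hρ', LinearEquiv.conj_apply_apply] using hW g ⟨e v, hv, rfl⟩
    simpa [Submodule.comap_equiv_eq_map_symm] using hirr _ hinv

/-- A minimal nonzero invariant subspace of `W` is an irreducible, nontrivial subrepresentation. -/
theorem le_finrank_of_invariant (hG : IsQuasirandom G D) (ρ : Representation ℂ G V)
    {W : Submodule ℂ V} (hW : W ≠ ⊥) (hWρ : ∀ g, W ≤ W.comap (ρ g))
    (hfix : ∀ v ∈ W, (∀ g, ρ g v = v) → v = 0) : D ≤ finrank ℂ W := by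
  obtain ⟨U, ⟨hUW, hU, hUρ⟩, hmin⟩ := wellFounded_lt.has_min
    {U : Submodule ℂ V | U ≤ W ∧ U ≠ ⊥ ∧ ∀ g, U ≤ U.comap (ρ g)} ⟨W, le_rfl, hW, hWρ⟩
  refine (hG.le_finrank (ρ.subrepresentation U hUρ) ?_ fun X hX => ?_).trans
    (Submodule.finrank_mono hUW)
  · by_contra! htriv
    refine hU ((Submodule.eq_bot_iff U).2 fun u hu => hfix u (hUW hu) fun g => ?_)
    simpa using congr(($(htriv g) ⟨u, hu⟩ : V))
  · by_cases hX0 : X = ⊥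
    · exact .inl hX0
    have hinj := Submodule.map_injective_of_injective U.injective_subtype
    have hXU : X.map U.subtype ≤ U := Submodule.map_subtype_le U X
    have hXρ : ∀ g, X.map U.subtype ≤ (X.map U.subtype).comap (ρ g) := by
      rintro g _ ⟨x, hx, rfl⟩
      exact ⟨_, hX g ⟨x, hx, rfl⟩, rfl⟩
    have hX0' : X.map U.subtype ≠ ⊥ := by rwa [Ne, ← Submodule.map_bot U.subtype, hinj.eq_iff]
    refine .inr (hinj ?_)
    rw [Submodule.map_subtype_top]
    by_contra hne
    exact hmin _ ⟨hXU.trans hUW, hX0', hXρ⟩ (lt_of_le_of_ne hXU hne)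

end IsQuasirandom

namespace LinearMap.IsSymmetric

section FiniteDimensional

variable {𝕜 E : Type*} [RCLike 𝕜] [NormedAddCommGroup E] [InnerProductSpace 𝕜 E]
  [FiniteDimensional 𝕜 E] {T : E →ₗ[𝕜] E}

theorem mul_norm_sq_le_re_inner_map_self (hT : T.IsSymmetric) {c : ℝ}
    (hc : ∀ μ : ℝ, Module.End.HasEigenvalue T (μ : 𝕜) → c ≤ μ) (x : E) :
    c * ‖x‖ ^ 2 ≤ RCLike.re ⟪x, T x⟫_𝕜 := by
  let b := hT.eigenvectorBasis rfl
  let μ := hT.eigenvalues rfl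
  have hterm : ∀ i, ⟪x, b i⟫_𝕜 * ⟪b i, T x⟫_𝕜 = (μ i * ‖⟪b i, x⟫_𝕜‖ ^ 2 : ℝ) := fun i => by
    rw [← hT, hT.apply_eigenvectorBasis, inner_smul_left, RCLike.conj_ofReal,
      ← inner_conj_symm, mul_left_comm, RCLike.conj_mul]
    push_cast
    rfl
  rw [← b.sum_inner_mul_inner, ← b.sum_sq_norm_inner_right x, Finset.mul_sum]
  simp only [hterm, map_sum, RCLike.ofReal_re]
  gcongr with i
  exact hc _ (hT.hasEigenvalue_eigenvalues rfl i)

end FiniteDimensional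

section EuclideanSpace

variable {𝕜 ι : Type*} [RCLike 𝕜] [Fintype ι] [DecidableEq ι]
  {T : EuclideanSpace 𝕜 ι →ₗ[𝕜] EuclideanSpace 𝕜 ι}

theorem sum_norm_sq_apply_orthonormal_le (hT : T.IsSymmetric) {κ : Type*} [Fintype κ]
    {e : κ → EuclideanSpace 𝕜 ι} (he : Orthonormal 𝕜 e) :
    ∑ k, ‖T (e k)‖ ^ 2 ≤ ∑ i, ‖T (EuclideanSpace.single i 1)‖ ^ 2 := by
  have hcoord : ∀ k i, ‖T (e k) i‖ = ‖⟪e k, T (EuclideanSpace.single i 1)⟫_𝕜‖ := fun k i => by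
    rw [norm_inner_symm, hT, EuclideanSpace.inner_single_left, map_one, one_mul]
  calc ∑ k, ‖T (e k)‖ ^ 2
      = ∑ i, ∑ k, ‖⟪e k, T (EuclideanSpace.single i 1)⟫_𝕜‖ ^ 2 := by
        simp only [EuclideanSpace.norm_sq_eq, hcoord]
        exact Finset.sum_comm
    _ ≤ ∑ i, ‖T (EuclideanSpace.single i 1)‖ ^ 2 := by
        gcongr with i
        exact he.sum_inner_products_le _

theorem finrank_mul_norm_sq_le (hT : T.IsSymmetric) {W : Submodule 𝕜 (EuclideanSpace 𝕜 ι)}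
    {μ : 𝕜} (hW : ∀ w ∈ W, T w = μ • w) :
    finrank 𝕜 W * ‖μ‖ ^ 2 ≤ ∑ i, ‖T (EuclideanSpace.single i 1)‖ ^ 2 := by
  let b := stdOrthonormalBasis 𝕜 W
  have hb : Orthonormal 𝕜 fun k => (b k : EuclideanSpace 𝕜 ι) :=
    b.orthonormal.comp_linearIsometry W.subtypeₗᵢ
  refine le_of_eq_of_le ?_ (hT.sum_norm_sq_apply_orthonormal_le hb)
  simp [hW _ (b _).2, norm_smul, hb.1]

end EuclideanSpace

end LinearMap.IsSymmetric

section IndicatorVec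

variable (𝕜 : Type*) {V : Type*} [RCLike 𝕜] [DecidableEq V]

def indicatorVec (A : Finset V) : EuclideanSpace 𝕜 V :=
  WithLp.toLp 2 fun v => if v ∈ A then 1 else 0

variable [Fintype V]

noncomputable def centeredIndicatorVec (A : Finset V) : EuclideanSpace 𝕜 V :=
  indicatorVec 𝕜 A - ((#A / Fintype.card V : ℝ) : 𝕜) • indicatorVec 𝕜 univ

variable {𝕜}

theorem inner_indicatorVec_left (A : Finset V) (f : EuclideanSpace 𝕜 V) :
    ⟪indicatorVec 𝕜 A, f⟫_𝕜 = ∑ v ∈ A, f v := by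
  simp [indicatorVec, PiLp.inner_apply, apply_ite (starRingEnd 𝕜), Finset.sum_ite_mem]

theorem inner_indicatorVec_indicatorVec (A B : Finset V) :
    ⟪indicatorVec 𝕜 A, indicatorVec 𝕜 B⟫_𝕜 = #(A ∩ B) := by
  rw [inner_indicatorVec_left]
  simp [indicatorVec]

variable [Nonempty V]

theorem centeredIndicatorVec_mem_orthogonal (A : Finset V) :
    centeredIndicatorVec 𝕜 A ∈ (𝕜 ∙ indicatorVec 𝕜 (univ : Finset V))ᗮ := by
  have hV : (Fintype.card V : 𝕜) ≠ 0 := Nat.cast_ne_zero.2 Fintype.card_ne_zero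
  rw [Submodule.mem_orthogonal_singleton_iff_inner_right]
  simp only [centeredIndicatorVec, inner_sub_right, inner_smul_right,
    inner_indicatorVec_indicatorVec, univ_inter, inter_self, card_univ]
  push_cast
  field_simp
  ring

theorem norm_sq_centeredIndicatorVec (A : Finset V) :
    ‖centeredIndicatorVec 𝕜 A‖ ^ 2 = #A - #A ^ 2 / Fintype.card V := by
  have hV : (Fintype.card V : 𝕜) ≠ 0 := Nat.cast_ne_zero.2 Fintype.card_ne_zero
  have hinner : ⟪centeredIndicatorVec 𝕜 A, centeredIndicatorVec 𝕜 A⟫_𝕜 =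
      ((#A - #A ^ 2 / Fintype.card V : ℝ) : 𝕜) := by
    simp only [centeredIndicatorVec, inner_sub_left, inner_sub_right, inner_smul_left,
      inner_smul_right, RCLike.conj_ofReal, inner_indicatorVec_indicatorVec, univ_inter,
      inter_univ, inter_self, card_univ]
    push_cast
    field_simp
    ring
  rw [@norm_sq_eq_re_inner 𝕜, hinner, RCLike.ofReal_re]

end IndicatorVec

namespace SimpleGraph

variable {𝕜 V : Type*} [RCLike 𝕜] [Fintype V] [DecidableEq V] {Γ : SimpleGraph V}
  [DecidableRel Γ.Adj]

section

variable (Γ)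

theorem toEuclideanLin_adjMatrix_apply (f : EuclideanSpace 𝕜 V) (v : V) :
    (Γ.adjMatrix 𝕜).toEuclideanLin f v = ∑ w ∈ Γ.neighborFinset v, f w := by
  simp [Matrix.toLpLin_apply]

theorem isSymmetric_toEuclideanLin_adjMatrix : (Γ.adjMatrix 𝕜).toEuclideanLin.IsSymmetric :=
  Matrix.isSymmetric_toEuclideanLin_iff.2 (Γ.isHermitian_adjMatrix 𝕜)

theorem norm_sq_toEuclideanLin_adjMatrix_single (v : V) :
    ‖(Γ.adjMatrix 𝕜).toEuclideanLin (EuclideanSpace.single v 1)‖ ^ 2 = Γ.degree v := by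
  rw [@norm_sq_eq_re_inner 𝕜, Γ.isSymmetric_toEuclideanLin_adjMatrix, ← LinearMap.comp_apply,
    ← Matrix.toLpLin_mul_same, EuclideanSpace.inner_single_left]
  simp only [Matrix.toLpLin_apply, PiLp.ofLp_single, Matrix.mulVec_single_one, map_one, one_mul]
  rw [Matrix.col_apply, adjMatrix_mul_self_apply_self, RCLike.natCast_re]

end

theorem toEuclideanLin_adjMatrix_piLpCongrLeft (φ : Γ ≃g Γ) (f : EuclideanSpace 𝕜 V) :
    (Γ.adjMatrix 𝕜).toEuclideanLin (LinearIsometryEquiv.piLpCongrLeft 2 𝕜 𝕜 φ.toEquiv f) =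
      LinearIsometryEquiv.piLpCongrLeft 2 𝕜 𝕜 φ.toEquiv ((Γ.adjMatrix 𝕜).toEuclideanLin f) := by
  ext v
  simp only [Matrix.toLpLin_apply, LinearIsometryEquiv.piLpCongrLeft_apply, PiLp.toLp_apply,
    Equiv.piCongrLeft'_apply, Matrix.mulVec, dotProduct]
  refine (Fintype.sum_equiv φ.toEquiv _ _ fun w => ?_).symm
  have hadj : Γ.Adj (φ.symm v) w ↔ Γ.Adj v (φ w) := by rw [← φ.map_adj_iff, φ.apply_symm_apply]
  simp only [adjMatrix_apply, ite_mul, one_mul, zero_mul]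
  exact if_congr hadj (congrArg f (φ.symm_apply_apply w).symm) rfl

theorem IsRegularOfDegree.toEuclideanLin_adjMatrix_indicatorVec_univ {d : ℕ}
    (hd : Γ.IsRegularOfDegree d) :
    (Γ.adjMatrix 𝕜).toEuclideanLin (indicatorVec 𝕜 univ) = (d : 𝕜) • indicatorVec 𝕜 univ := by
  ext v
  simp [indicatorVec, hd v]

theorem IsRegularOfDegree.toEuclideanLin_adjMatrix_mem_orthogonal {d : ℕ}
    (hd : Γ.IsRegularOfDegree d) {f : EuclideanSpace 𝕜 V}
    (hf : f ∈ (𝕜 ∙ indicatorVec 𝕜 (univ : Finset V))ᗮ) :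
    (Γ.adjMatrix 𝕜).toEuclideanLin f ∈ (𝕜 ∙ indicatorVec 𝕜 (univ : Finset V))ᗮ := by
  rw [Submodule.mem_orthogonal_singleton_iff_inner_right] at hf ⊢
  rw [← Γ.isSymmetric_toEuclideanLin_adjMatrix, hd.toEuclideanLin_adjMatrix_indicatorVec_univ,
    inner_smul_left, hf, mul_zero]

theorem IsIndepSet.inner_toEuclideanLin_adjMatrix_indicatorVec {A : Finset V}
    (hA : Γ.IsIndepSet A) :
    ⟪indicatorVec 𝕜 A, (Γ.adjMatrix 𝕜).toEuclideanLin (indicatorVec 𝕜 A)⟫_𝕜 = 0 := by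
  rw [inner_indicatorVec_left]
  refine Finset.sum_eq_zero fun v hv => ?_
  rw [toEuclideanLin_adjMatrix_apply]
  refine Finset.sum_eq_zero fun w hw => if_neg fun hwA => ?_
  have hvw := (Γ.mem_neighborFinset v w).1 hw
  exact hA hv hwA hvw.ne hvw

theorem IsIndepSet.re_inner_toEuclideanLin_adjMatrix_centeredIndicatorVec [Nonempty V] {d : ℕ}
    (hd : Γ.IsRegularOfDegree d) {A : Finset V} (hA : Γ.IsIndepSet A) :
    RCLike.re ⟪centeredIndicatorVec 𝕜 A,
      (Γ.adjMatrix 𝕜).toEuclideanLin (centeredIndicatorVec 𝕜 A)⟫_𝕜 =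
      -(d * #A ^ 2 / Fintype.card V) := by
  have hV : (Fintype.card V : 𝕜) ≠ 0 := Nat.cast_ne_zero.2 Fintype.card_ne_zero
  have h1A : ⟪indicatorVec 𝕜 univ, (Γ.adjMatrix 𝕜).toEuclideanLin (indicatorVec 𝕜 A)⟫_𝕜 =
      d * #A := by
    rw [← Γ.isSymmetric_toEuclideanLin_adjMatrix, hd.toEuclideanLin_adjMatrix_indicatorVec_univ,
      inner_smul_left, inner_indicatorVec_indicatorVec, univ_inter, map_natCast]
  have hinner : ⟪centeredIndicatorVec 𝕜 A,
      (Γ.adjMatrix 𝕜).toEuclideanLin (centeredIndicatorVec 𝕜 A)⟫_𝕜 =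
      ((-(d * #A ^ 2 / Fintype.card V) : ℝ) : 𝕜) := by
    simp only [centeredIndicatorVec, map_sub, map_smul,
      hd.toEuclideanLin_adjMatrix_indicatorVec_univ, inner_sub_left, inner_sub_right, inner_smul_left, inner_smul_right, RCLike.conj_ofReal,
      hA.inner_toEuclideanLin_adjMatrix_indicatorVec, h1A, inner_indicatorVec_indicatorVec,
      inter_univ, card_univ]
    push_cast
    field_simp
    ring
  rw [hinner, RCLike.ofReal_re]

/-- Hoffman's ratio bound. -/
theorem IsRegularOfDegree.mul_card_le_of_isIndepSet {d : ℕ} (hd : Γ.IsRegularOfDegree d)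
    {c : ℝ} (hc0 : 0 ≤ c)
    (hc : ∀ f ∈ (𝕜 ∙ indicatorVec 𝕜 (univ : Finset V))ᗮ,
      -c * ‖f‖ ^ 2 ≤ RCLike.re ⟪f, (Γ.adjMatrix 𝕜).toEuclideanLin f⟫_𝕜)
    {A : Finset V} (hA : Γ.IsIndepSet A) :
    d * #A ≤ c * (Fintype.card V - #A) := by
  rcases A.eq_empty_or_nonempty with rfl | ⟨v, hv⟩
  · simpa using mul_nonneg hc0 (Nat.cast_nonneg _)
  have : Nonempty V := ⟨v⟩
  have key := hc _ (centeredIndicatorVec_mem_orthogonal A)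
  rw [norm_sq_centeredIndicatorVec, hA.re_inner_toEuclideanLin_adjMatrix_centeredIndicatorVec hd]
    at key
  have hA0 : (0 : ℝ) < #A := Nat.cast_pos.2 (card_pos.2 ⟨v, hv⟩)
  have hV : (0 : ℝ) < Fintype.card V := Nat.cast_pos.2 Fintype.card_pos
  refine le_of_mul_le_mul_right ?_ (div_pos hA0 hV)
  calc (d : ℝ) * #A * (#A / Fintype.card V) = d * #A ^ 2 / Fintype.card V := by ring
    _ ≤ c * (#A - #A ^ 2 / Fintype.card V) := by linarith
    _ = c * (Fintype.card V - #A) * (#A / Fintype.card V) := by field_simp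

theorem IsRegularOfDegree.le_mul_of_colorable [Nonempty V] {d : ℕ} (hd : Γ.IsRegularOfDegree d)
    {c : ℝ} (hc0 : 0 ≤ c)
    (hc : ∀ f ∈ (𝕜 ∙ indicatorVec 𝕜 (univ : Finset V))ᗮ,
      -c * ‖f‖ ^ 2 ≤ RCLike.re ⟪f, (Γ.adjMatrix 𝕜).toEuclideanLin f⟫_𝕜)
    {k : ℕ} (hk : Γ.Colorable k) :
    d ≤ c * (k - 1) := by
  obtain ⟨C⟩ := hk
  have hclass : ∀ i, Γ.IsIndepSet ↑(univ.filter (C · = i)) := fun i => by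
    simpa [Coloring.colorClass] using C.isIndepSet_colorClass i
  have hsum : ∑ i, (#(univ.filter (C · = i)) : ℝ) = Fintype.card V := by
    rw [← Nat.cast_sum, ← card_eq_sum_card_fiberwise fun v _ => mem_univ (C v), card_univ]
  have hle := Finset.sum_le_sum fun i (_ : i ∈ univ) =>
    hd.mul_card_le_of_isIndepSet hc0 hc (hclass i)
  rw [← Finset.mul_sum, ← Finset.mul_sum, Finset.sum_sub_distrib, hsum, sum_const, card_univ,
    Fintype.card_fin, nsmul_eq_mul] at hle
  refine le_of_mul_le_mul_right ?_ (Nat.cast_pos.2 Fintype.card_pos : (0 : ℝ) < Fintype.card V)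
  linarith

end SimpleGraph

section Cayley

variable {G : Type*} [Group G] {S : Set G}

theorem cayleyGraph_adj (hS : ∀ s ∈ S, s⁻¹ ∈ S) (h1 : (1 : G) ∉ S) {x y : G} :
    (cayleyGraph S).Adj x y ↔ x⁻¹ * y ∈ S := by
  rw [cayleyGraph, SimpleGraph.fromRel_adj]
  refine ⟨fun ⟨_, h⟩ => h.elim id fun h => by simpa using hS _ h, fun h => ⟨?_, .inl h⟩⟩
  rintro rfl
  exact h1 (by simpa using h)

theorem cayleyGraph_isRegularOfDegree [Fintype G] [DecidableRel (cayleyGraph S).Adj]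
    (hS : ∀ s ∈ S, s⁻¹ ∈ S) (h1 : (1 : G) ∉ S) :
    (cayleyGraph S).IsRegularOfDegree S.ncard := fun x => by
  have hN : (cayleyGraph S).neighborSet x = (x * ·) '' S := by
    ext y
    simp [Set.image_mul_left, cayleyGraph_adj hS h1]
  rw [← SimpleGraph.card_neighborFinset_eq_degree, ← Set.ncard_coe_finset,
    SimpleGraph.coe_neighborFinset, hN, Set.ncard_image_of_injective _ (mul_right_injective x)]

def cayleyGraph.leftMul (S : Set G) (g : G) : cayleyGraph S ≃g cayleyGraph S where
  toEquiv := Equiv.mulLeft g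
  map_rel_iff' := by simp [cayleyGraph, mul_assoc]

variable [Fintype G]

variable (G) in
noncomputable def leftRegular : Representation ℂ G (EuclideanSpace ℂ G) where
  toFun g := (LinearIsometryEquiv.piLpCongrLeft 2 ℂ ℂ (Equiv.mulLeft g)).toLinearMap
  map_one' := by ext; simp [-Equiv.mulLeft_one]
  map_mul' g h := by ext; simp [-Equiv.mulLeft_mul, mul_assoc]

theorem leftRegular_apply (g : G) (f : EuclideanSpace ℂ G) (x : G) :
    leftRegular G g f x = f (g⁻¹ * x) := rfl

variable [DecidableEq G]

theorem inner_indicatorVec_univ_leftRegular (g : G) (f : EuclideanSpace ℂ G) :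
    ⟪indicatorVec ℂ (univ : Finset G), leftRegular G g f⟫_ℂ =
      ⟪indicatorVec ℂ (univ : Finset G), f⟫_ℂ := by
  simp only [inner_indicatorVec_left, leftRegular_apply]
  exact Fintype.sum_equiv (Equiv.mulLeft g⁻¹) _ _ fun _ => rfl

theorem eq_zero_of_forall_leftRegular_eq {v : EuclideanSpace ℂ G}
    (hv : v ∈ (ℂ ∙ indicatorVec ℂ (univ : Finset G))ᗮ) (hfix : ∀ g, leftRegular G g v = v) :
    v = 0 := by
  have hconst : v ∈ ℂ ∙ indicatorVec ℂ (univ : Finset G) := by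
    refine Submodule.mem_span_singleton.2 ⟨v 1, ?_⟩
    ext x
    simpa [leftRegular_apply, indicatorVec] using congr($(hfix x⁻¹) 1).symm
  simpa using (Submodule.inf_orthogonal_eq_bot _).le ⟨hconst, hv⟩

variable {D : ℕ} [DecidableRel (cayleyGraph S).Adj]

theorem IsQuasirandom.mul_norm_sq_le_of_apply_eq_smul (hG : IsQuasirandom G D)
    (hS : ∀ s ∈ S, s⁻¹ ∈ S) (h1 : (1 : G) ∉ S) {μ : ℂ} {v : EuclideanSpace ℂ G}
    (hv : v ∈ (ℂ ∙ indicatorVec ℂ (univ : Finset G))ᗮ) (hv0 : v ≠ 0)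
    (hTv : ((cayleyGraph S).adjMatrix ℂ).toEuclideanLin v = μ • v) :
    D * ‖μ‖ ^ 2 ≤ Fintype.card G * S.ncard := by
  set T := ((cayleyGraph S).adjMatrix ℂ).toEuclideanLin
  set W := (ℂ ∙ indicatorVec ℂ (univ : Finset G))ᗮ ⊓ Module.End.eigenspace T μ
  have hWρ : ∀ g, W ≤ W.comap (leftRegular G g) := by
    rintro g w ⟨hwU, hwμ⟩
    refine ⟨?_, ?_⟩
    · rw [SetLike.mem_coe, Submodule.mem_orthogonal_singleton_iff_inner_right] at hwU ⊢
      rwa [inner_indicatorVec_univ_leftRegular]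
    · rw [SetLike.mem_coe, Module.End.mem_eigenspace_iff] at hwμ ⊢
      exact (SimpleGraph.toEuclideanLin_adjMatrix_piLpCongrLeft (cayleyGraph.leftMul S g) w).trans
        (by rw [hwμ, map_smul]; rfl)
  have hDW : D ≤ finrank ℂ W := hG.le_finrank_of_invariant (leftRegular G)
    ((Submodule.ne_bot_iff W).2 ⟨v, ⟨hv, Module.End.mem_eigenspace_iff.2 hTv⟩, hv0⟩) hWρ
    fun w hw hfix => eq_zero_of_forall_leftRegular_eq hw.1 hfix
  have hHS := (cayleyGraph S).isSymmetric_toEuclideanLin_adjMatrix.finrank_mul_norm_sq_le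
    (W := W) fun w hw => Module.End.mem_eigenspace_iff.1 hw.2
  simp only [SimpleGraph.norm_sq_toEuclideanLin_adjMatrix_single,
    cayleyGraph_isRegularOfDegree hS h1 _, sum_const, card_univ, nsmul_eq_mul] at hHS
  calc (D : ℝ) * ‖μ‖ ^ 2 ≤ finrank ℂ W * ‖μ‖ ^ 2 := by gcongr
    _ ≤ _ := hHS

theorem IsQuasirandom.neg_sqrt_mul_norm_sq_le_re_inner (hG : IsQuasirandom G D) (hD : 0 < D)
    (hS : ∀ s ∈ S, s⁻¹ ∈ S) (h1 : (1 : G) ∉ S) {f : EuclideanSpace ℂ G}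
    (hf : f ∈ (ℂ ∙ indicatorVec ℂ (univ : Finset G))ᗮ) :
    -√(Fintype.card G * S.ncard / D) * ‖f‖ ^ 2 ≤
      RCLike.re ⟪f, ((cayleyGraph S).adjMatrix ℂ).toEuclideanLin f⟫_ℂ := by
  set U := (ℂ ∙ indicatorVec ℂ (univ : Finset G))ᗮ
  have hTU : ∀ f ∈ U, ((cayleyGraph S).adjMatrix ℂ).toEuclideanLin f ∈ U := fun _ =>
    (cayleyGraph_isRegularOfDegree hS h1).toEuclideanLin_adjMatrix_mem_orthogonal
  have hsymm := (cayleyGraph S).isSymmetric_toEuclideanLin_adjMatrix.restrict_invariant hTU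
  refine hsymm.mul_norm_sq_le_re_inner_map_self (fun μ hμ => ?_) ⟨f, hf⟩
  obtain ⟨⟨v, hv⟩, hvμ⟩ := hμ.exists_hasEigenvector
  have hbound := hG.mul_norm_sq_le_of_apply_eq_smul hS h1 hv (by simpa using hvμ.2)
    congr(($(Module.End.mem_eigenspace_iff.1 hvμ.1) : EuclideanSpace ℂ G))
  rw [RCLike.norm_ofReal, sq_abs] at hbound
  refine neg_le_of_abs_le (Real.abs_le_sqrt ?_)
  rw [le_div_iff₀ (by exact_mod_cast hD)]
  linarith

end Cayley

/-- If `G` is a finite `D`-quasirandom group and `S` a symmetric subset of `G`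
not containing the identity, then `χ(Cay(G,S)) ≥ √(D·|S|/|G|)`. -/
theorem chromatic_lower_bound_quasirandom {G : Type*} [Group G] [Fintype G]
    (D : ℕ) (hD : 0 < D)
    (hquasi : ∀ (V : Type) [AddCommGroup V] [Module ℂ V] [FiniteDimensional ℂ V]
      (ρ : Representation ℂ G V),
      (∃ g : G, ρ g ≠ LinearMap.id) →
      (∀ W : Submodule ℂ V, (∀ g : G, W.map (ρ g) ≤ W) → W = ⊥ ∨ W = ⊤) →
      D ≤ Module.finrank ℂ V)
    (S : Set G) (hS : ∀ s ∈ S, s⁻¹ ∈ S) (h1 : (1 : G) ∉ S) :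
    ∀ n : ℕ, (cayleyGraph S).Colorable n →
      Real.sqrt ((D : ℝ) * S.ncard / Fintype.card G) ≤ n := by
  classical
  intro n hn
  have hdn := (cayleyGraph_isRegularOfDegree hS h1).le_mul_of_colorable (Real.sqrt_nonneg _)
    (fun _ hf => IsQuasirandom.neg_sqrt_mul_norm_sq_le_re_inner hquasi hD hS h1 hf) hn
  have hd0 : (0 : ℝ) ≤ S.ncard := Nat.cast_nonneg _
  generalize (S.ncard : ℝ) = d at hdn hd0 ⊢
  rcases hd0.eq_or_lt with rfl | hd
  · simp
  have hc : 0 < √(Fintype.card G * d / D) := Real.sqrt_pos.2 (by positivity)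
  have hsqrt : √(D * d / Fintype.card G) * √(Fintype.card G * d / D) = d := by
    have hG : (Fintype.card G : ℝ) ≠ 0 := by positivity
    have hD' : (D : ℝ) ≠ 0 := by positivity
    rw [← Real.sqrt_mul (by positivity)]
    convert Real.sqrt_sq hd.le using 2
    field_simp
  refine le_of_mul_le_mul_right ?_ hc
  linarith
end

section
/- Let q be an odd prime power. The set E of matrices in SL₂(𝔽_q) having −1 as an eigenvalue has exactly q² elements. -/
/-!
`det (X + 1) = det X + tr X + 1` for `2 × 2` matrices, so for `X ∈ SL₂(F)` the condition says
`tr X = -2`, i.e. `N = X + 1` is traceless and singular (nilpotent). Writing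
`N = !![a, b; c, -a]`, these are the points of the cone `a² + b c = 0` in `F³`. Off the plane
`b = 0` a point is determined by `(a, b)` with `b ≠ 0`; on it `a = 0` and `c` is free. So there are
`q (q - 1) + q = q²` of them.
-/

open Matrix

namespace Matrix

variable {R : Type*} [CommRing R]

theorem det_add_one_fin_two (A : Matrix (Fin 2) (Fin 2) R) :
    (A + 1).det = A.det + A.trace + 1 := by
  simp only [det_fin_two, trace_fin_two, add_apply, one_apply_eq, one_apply_ne, ne_eq,
    Fin.zero_eq_one_iff, Fin.one_eq_zero_iff, OfNat.ofNat_ne_one, not_false_eq_true, add_zero]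
  ring

theorem det_sub_one_fin_two (A : Matrix (Fin 2) (Fin 2) R) :
    (A - 1).det = A.det - A.trace + 1 := by
  simp only [det_fin_two, trace_fin_two, sub_apply, one_apply_eq, one_apply_ne, ne_eq,
    Fin.zero_eq_one_iff, Fin.one_eq_zero_iff, OfNat.ofNat_ne_one, not_false_eq_true, sub_zero]
  ring

variable (R) in
def SpecialLinearGroup.addOneEquivTracelessSingular :
    {X : SpecialLinearGroup (Fin 2) R | ((X : Matrix (Fin 2) (Fin 2) R) + 1).det = 0} ≃
      {N : Matrix (Fin 2) (Fin 2) R // N.trace = 0 ∧ N.det = 0} where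
  toFun X := ⟨X.1 + 1, by
    obtain ⟨X, hX : ((X : Matrix (Fin 2) (Fin 2) R) + 1).det = 0⟩ := X
    refine ⟨?_, hX⟩
    rw [det_add_one_fin_two, SpecialLinearGroup.det_coe] at hX
    rw [trace_add, trace_one, Fintype.card_fin]
    linear_combination hX⟩
  invFun N := ⟨⟨N.1 - 1, by rw [det_sub_one_fin_two, N.2.1, N.2.2]; ring⟩, by
    show (N.1 - 1 + 1).det = 0
    simpa using N.2.2⟩
  left_inv X := by ext : 2; simp
  right_inv N := by ext : 1; simp

variable (R) in
def tracelessSingularEquivSqAddMulEqZero :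
    {N : Matrix (Fin 2) (Fin 2) R // N.trace = 0 ∧ N.det = 0} ≃
      {p : R × R × R // p.1 ^ 2 + p.2.1 * p.2.2 = 0} where
  toFun N := ⟨(N.1 0 0, N.1 0 1, N.1 1 0), by
    obtain ⟨N, htr, hdet⟩ := N
    rw [trace_fin_two] at htr
    rw [det_fin_two] at hdet
    linear_combination N 0 0 * htr - hdet⟩
  invFun p := ⟨!![p.1.1, p.1.2.1; p.1.2.2, -p.1.1], by
    simp only [trace_fin_two, det_fin_two, of_apply, cons_val', cons_val_zero, cons_val_one,
      cons_val_fin_one, add_neg_cancel, mul_neg, true_and]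
    linear_combination -p.2⟩
  left_inv N := by
    obtain ⟨N, htr, -⟩ := N
    rw [trace_fin_two] at htr
    ext i j
    fin_cases i <;> fin_cases j <;> simp [eq_neg_of_add_eq_zero_right htr]
  right_inv p := by simp

end Matrix

section SqAddMulEqZero

variable (F : Type*) [Field F]

open scoped Classical in
noncomputable def sqAddMulEqZeroEquiv :
    {p : F × F × F // p.1 ^ 2 + p.2.1 * p.2.2 = 0} ≃ (F × Fˣ) ⊕ F where
  toFun p := if hb : p.1.2.1 = 0 then .inr p.1.2.2 else .inl (p.1.1, Units.mk0 _ hb)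
  invFun
    | .inl (a, b) => ⟨(a, b, -a ^ 2 / b), by field_simp; ring⟩
    | .inr c => ⟨(0, 0, c), by simp⟩
  left_inv := by
    rintro ⟨⟨a, b, c⟩, h⟩
    by_cases hb : b = 0
    · obtain rfl : a = 0 := by simpa [hb] using h
      simp [hb]
    · have hc : c = -a ^ 2 / b := by
        rw [eq_div_iff hb]
        linear_combination h
      simp [hb, hc]
  right_inv := by
    rintro (⟨a, b⟩ | c) <;> simp

theorem card_sq_add_mul_eq_zero [Finite F] :
    Nat.card {p : F × F × F // p.1 ^ 2 + p.2.1 * p.2.2 = 0} = Nat.card F ^ 2 := by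
  rw [Nat.card_congr (sqAddMulEqZeroEquiv F), Nat.card_sum, Nat.card_prod,
    Nat.card_eq_card_units_add_one F]
  ring

end SqAddMulEqZero

theorem card_eigenvalue_neg_one_general {F : Type} [Field F] [Fintype F] :
    {X : Matrix.SpecialLinearGroup (Fin 2) F |
      ((X : Matrix (Fin 2) (Fin 2) F) + 1).det = 0}.ncard = Fintype.card F ^ 2 := by
  rw [← Nat.card_coe_set_eq, Nat.card_congr (SpecialLinearGroup.addOneEquivTracelessSingular F),
    Nat.card_congr (tracelessSingularEquivSqAddMulEqZero F), card_sq_add_mul_eq_zero,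
    Nat.card_eq_fintype_card]

/-- Over a finite field `F` of odd order `q`, the set of matrices in `SL₂(F)`
having `-1` as an eigenvalue (i.e. `det(X + I) = 0`) has exactly `q²` elements. -/
theorem card_eigenvalue_neg_one {F : Type} [Field F] [Fintype F]
    (hodd : Odd (Fintype.card F)) :
    {X : Matrix.SpecialLinearGroup (Fin 2) F |
      ((X : Matrix (Fin 2) (Fin 2) F) + 1).det = 0}.ncard = Fintype.card F ^ 2 :=
  card_eigenvalue_neg_one_general
end

section
/- Let q be an odd prime power and let ν be a generator of 𝔽_q*. The conjugacy class in SL₂(𝔽_q) of the matrix [[−1,0],[−1,−1]] has exactly (q²−1)/2 elements, and similarly for [[−1,0],[−ν,−1]]. -/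
/-!
The conjugacy class of `T c` is the orbit of `T c` under conjugation, so it has
`|SL₂(𝔽_q)| / |C(T c)|` elements. Since `det : GL₂(𝔽_q) → 𝔽_q*` is onto with kernel
`SL₂(𝔽_q)`, `|SL₂(𝔽_q)| = q(q² - 1)`. For `c ≠ 0` the centraliser of `T c` consists of
the matrices `[[a, 0], [x, a]]` with `a² = 1`, and there are `2q` of them when `q` is odd.
So every `T c` with `c ≠ 0`, in particular `c = -1` and `c = -ν`, has a class of size
`q(q² - 1) / 2q = (q² - 1) / 2`.
-/

/-- The matrix `[[-1,0],[c,-1]]` as an element of `SL₂(F)`. -/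
def T {F : Type} [Field F] (c : F) : Matrix.SpecialLinearGroup (Fin 2) F :=
  ⟨!![-1, 0; c, -1], by norm_num [Matrix.det_fin_two_of]⟩

open Matrix

theorem ncard_setOf_isConj_mul_card_centralizer {G : Type*} [Group G] (g : G) :
    {x | IsConj g x}.ncard * Nat.card (Subgroup.centralizer {g}) = Nat.card G := by
  have horbit : {x | IsConj g x} = MulAction.orbit (ConjAct G) g := by
    ext x
    rw [Set.mem_ofPred_eq, ConjAct.mem_orbit_conjAct, isConj_comm]
  rw [horbit, ← MulAction.index_stabilizer, Subgroup.nat_card_centralizer_nat_card_stabilizer,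
    Subgroup.index_mul_card]
  rfl

section CardSpecialLinearGroup

variable {n R : Type*} [Fintype n] [DecidableEq n] [CommRing R]

def kerDetEquivSpecialLinearGroup :
    (GeneralLinearGroup.det : GL n R →* Rˣ).ker ≃ SpecialLinearGroup n R where
  toFun g := ⟨g.1, congrArg Units.val (MonoidHom.mem_ker.1 g.2)⟩
  invFun s := ⟨s.toGL, s.coeToGL_det⟩
  left_inv _ := Subtype.ext (Units.ext rfl)
  right_inv _ := rfl

theorem card_units_mul_card_specialLinearGroup [Nonempty n] :
    Nat.card Rˣ * Nat.card (SpecialLinearGroup n R) = Nat.card (GL n R) := by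
  rw [← Nat.card_congr kerDetEquivSpecialLinearGroup,
    ← (GeneralLinearGroup.det : GL n R →* Rˣ).ker.index_mul_card,
    Subgroup.index_ker, MonoidHom.range_eq_top.2 GeneralLinearGroup.det_surjective,
    Subgroup.card_top]

end CardSpecialLinearGroup

theorem card_specialLinearGroup_fin_two (F : Type*) [Field F] [Fintype F] :
    Nat.card (SpecialLinearGroup (Fin 2) F) = Fintype.card F * (Fintype.card F ^ 2 - 1) := by
  have h := card_units_mul_card_specialLinearGroup (n := Fin 2) (R := F)
  rw [card_GL_field, Nat.card_units, Nat.card_eq_fintype_card, Fin.prod_univ_two] at h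
  have hq : 0 < Fintype.card F - 1 := Nat.sub_pos_of_lt Fintype.one_lt_card
  have hsq : Fintype.card F ^ 2 - Fintype.card F = Fintype.card F * (Fintype.card F - 1) := by
    rw [Nat.mul_sub_one, sq]
  rw [Fin.val_zero, Fin.val_one, pow_zero, pow_one, hsq] at h
  exact Nat.eq_of_mul_eq_mul_left hq (h.trans (by ring))

theorem card_mul_self_eq_one {F : Type*} [Field F] (hF : ringChar F ≠ 2) :
    Nat.card {a : F // a * a = 1} = 2 := by
  have hset : {a : F | a * a = 1} = {1, -1} := by
    ext a
    simp [mul_self_eq_one_iff]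
  rw [← Set.coe_ofPred, Nat.card_coe_set_eq, hset,
    Set.ncard_pair (Ring.neg_one_ne_one_of_char_ne_two hF).symm]

variable {F : Type} [Field F]

theorem coe_T (c : F) : (T c : Matrix (Fin 2) (Fin 2) F) = !![-1, 0; c, -1] := rfl

theorem mem_centralizer_T_iff {c : F} (hc : c ≠ 0) {g : SpecialLinearGroup (Fin 2) F} :
    g ∈ Subgroup.centralizer {T c} ↔ g 0 1 = 0 ∧ g 1 1 = g 0 0 := by
  rw [Subgroup.mem_centralizer_singleton_iff, Matrix.SpecialLinearGroup.ext_iff]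
  simp only [Matrix.SpecialLinearGroup.coe_mul, coe_T, mul_apply, Fin.sum_univ_two,
    Fin.forall_fin_two, of_apply, cons_val', cons_val_zero, cons_val_one]
  grind

def centralizerTEquiv {c : F} (hc : c ≠ 0) :
    Subgroup.centralizer {T c} ≃ {a : F // a * a = 1} × F where
  toFun g := (⟨g.1 0 0, by
      obtain ⟨h01, h11⟩ := (mem_centralizer_T_iff hc).1 g.2
      have hdet := g.1.det_coe
      rwa [det_fin_two, h01, h11, zero_mul, sub_zero] at hdet⟩, g.1 1 0)
  invFun p := ⟨⟨!![p.1.1, 0; p.2, p.1.1], by simp [det_fin_two_of, p.1.2]⟩,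
    (mem_centralizer_T_iff hc).2 ⟨rfl, rfl⟩⟩
  left_inv g := by
    obtain ⟨h01, h11⟩ := (mem_centralizer_T_iff hc).1 g.2
    ext i j
    fin_cases i <;> fin_cases j <;> simp [h01, h11]
  right_inv _ := rfl

theorem card_centralizer_T [Fintype F] (hF : ringChar F ≠ 2) {c : F} (hc : c ≠ 0) :
    Nat.card (Subgroup.centralizer {T c}) = 2 * Fintype.card F := by
  rw [Nat.card_congr (centralizerTEquiv hc), Nat.card_prod, card_mul_self_eq_one hF,
    Nat.card_eq_fintype_card]

theorem ncard_setOf_isConj_T [Fintype F] (hF : ringChar F ≠ 2) {c : F} (hc : c ≠ 0) :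
    {X | IsConj (T c) X}.ncard = (Fintype.card F ^ 2 - 1) / 2 := by
  have h := ncard_setOf_isConj_mul_card_centralizer (T c)
  rw [card_centralizer_T hF hc, card_specialLinearGroup_fin_two] at h
  refine (Nat.div_eq_of_eq_mul_left two_pos ?_).symm
  exact Nat.eq_of_mul_eq_mul_left Fintype.card_pos (h.symm.trans (by ring))

theorem card_conj_classes_general {F : Type} [Field F] [Fintype F]
    (hodd : Odd (Fintype.card F))
    (ν : Fˣ) :
    {X : Matrix.SpecialLinearGroup (Fin 2) F | IsConj (T (-1 : F)) X}.ncard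
      = (Fintype.card F ^ 2 - 1) / 2 ∧
    {X : Matrix.SpecialLinearGroup (Fin 2) F | IsConj (T (-(ν : F))) X}.ncard
      = (Fintype.card F ^ 2 - 1) / 2 := by
  have hF : ringChar F ≠ 2 := fun h ↦ by
    simpa [Nat.odd_iff.1 hodd] using FiniteField.even_card_of_char_two h
  exact ⟨ncard_setOf_isConj_T hF (neg_ne_zero.2 one_ne_zero),
    ncard_setOf_isConj_T hF (neg_ne_zero.2 ν.ne_zero)⟩

/-- Over a finite field of odd order `q` with `ν` a generator of `Fˣ`, the
conjugacy class in `SL₂(F)` of `[[-1,0],[-1,-1]]` has exactly `(q²-1)/2`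
elements, and similarly for `[[-1,0],[-ν,-1]]`. -/
theorem card_conj_classes {F : Type} [Field F] [Fintype F]
    (hodd : Odd (Fintype.card F))
    (ν : Fˣ) (hν : ∀ x : Fˣ, x ∈ Subgroup.zpowers ν) :
    {X : Matrix.SpecialLinearGroup (Fin 2) F | IsConj (T (-1 : F)) X}.ncard
      = (Fintype.card F ^ 2 - 1) / 2 ∧
    {X : Matrix.SpecialLinearGroup (Fin 2) F | IsConj (T (-(ν : F))) X}.ncard
      = (Fintype.card F ^ 2 - 1) / 2 :=
  card_conj_classes_general hodd ν
end

section
/- Let q be an odd prime power. The chromatic number of the graph on vertex set SL₂(𝔽_q), where x and y are adjacent iff det(x+y) = 0, is at most 8(q+1). -/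
/-- The regular graph on `SL_n(R)`: distinct `x, y` are adjacent iff `det(x+y) = 0`. -/
def regGraph (n : ℕ) (R : Type) [CommRing R] :
    SimpleGraph (Matrix.SpecialLinearGroup (Fin n) R) where
  Adj x y := x ≠ y ∧ ((x : Matrix (Fin n) (Fin n) R) + y).det = 0
  symm := by
    constructor
    rintro x y ⟨h1, h2⟩
    exact ⟨h1.symm, by rwa [add_comm]⟩
  loopless := ⟨fun x h => h.1 rfl⟩

/-!
Two elements of `SL₂(F)` lie in the same coset `B x` of the Borel subgroup iff their bottom rows
are proportional, say `y₁ = t • x₁`; then `t * det (x + y) = (1 + t) ^ 2`, so `x` and `y` are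
adjacent only if `y₁ = -x₁`. Fix a choice of one vector out of each pair `±v` with `v ≠ 0`
(possible since `-v ≠ v` in odd characteristic). Colouring `x` by the point of `ℙ¹(F)` given by its
bottom row, and by whether that row is the chosen vector, is therefore proper, with `2 (q + 1)`
colours.
-/

open Function Matrix SimpleGraph
open scoped MatrixGroups LinearAlgebra.Projectivization

section HalfSign

variable {α : Type*} [InvolutiveNeg α]

def halfSign (f : α → ℕ) (v : α) : Bool :=
  f (-v) < f v

lemma halfSign_neg_ne {f : α → ℕ} (hf : Injective f) {v : α} (hv : -v ≠ v) :
    halfSign f (-v) ≠ halfSign f v := by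
  have := hf.ne hv
  simp only [halfSign, neg_neg, ne_eq, decide_eq_decide]
  omega

end HalfSign

lemma neg_ne_self_of_ringChar_ne_two {F V : Type*} [Field F] [AddCommGroup V] [Module F V]
    (hF : ringChar F ≠ 2) {v : V} (hv : v ≠ 0) : -v ≠ v := by
  intro h
  have h2v : (2 : F) • v = 0 := by rw [two_smul]; nth_rw 1 [← h]; exact neg_add_cancel v
  exact hv ((smul_eq_zero.mp h2v).resolve_left (Ring.two_ne_zero hF))

lemma mul_det_add_of_row_eq_smul {R : Type*} [CommRing R] {x y : SL(2, R)} {t : R}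
    (h : y 1 = t • x 1) : t * ((x : Matrix (Fin 2) (Fin 2) R) + y).det = (1 + t) ^ 2 := by
  have hc : y 1 0 = t * x 1 0 := congrFun h 0
  have hd : y 1 1 = t * x 1 1 := congrFun h 1
  have hx := x.det_coe
  have hy := y.det_coe
  rw [det_fin_two] at hx hy ⊢
  simp only [Matrix.add_apply, hc, hd] at hy ⊢
  linear_combination t * (1 + t) * hx + (1 + t) * hy

section Coloring

variable {F : Type} [Field F]

lemma row_eq_neg_of_adj_of_row_eq_smul {x y : SL(2, F)} (hxy : (regGraph 2 F).Adj x y) {t : F}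
    (h : y 1 = t • x 1) : y 1 = -x 1 := by
  have h1t : (1 + t) ^ 2 = 0 := by rw [← mul_det_add_of_row_eq_smul h, hxy.2, mul_zero]
  have ht : t = -1 := by linear_combination (pow_eq_zero_iff two_ne_zero).mp h1t
  rw [h, ht, neg_one_smul]

/-- The coset `B x` of the Borel subgroup, seen as the line spanned by the bottom row of `x`. -/
def bottomRowPoint (x : SL(2, F)) : ℙ F (Fin 2 → F) :=
  Projectivization.mk F (x 1) (x.row_ne_zero 1)

def regGraphColoring (hF : ringChar F ≠ 2) {f : (Fin 2 → F) → ℕ} (hf : Injective f) :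
    (regGraph 2 F).Coloring (ℙ F (Fin 2 → F) × Bool) :=
  Coloring.mk (fun x => (bottomRowPoint x, halfSign f (x 1))) fun {x y} hxy hcol => by
    obtain ⟨hpoint, hsign⟩ := Prod.mk.inj hcol
    obtain ⟨t, ht⟩ := (Projectivization.mk_eq_mk_iff' F _ _ _ _).mp hpoint
    rw [row_eq_neg_of_adj_of_row_eq_smul hxy.symm ht.symm] at hsign
    exact halfSign_neg_ne hf (neg_ne_self_of_ringChar_ne_two hF (y.row_ne_zero 1)) hsign

theorem chromaticNumber_regGraph_two_le [Finite F] (hF : ringChar F ≠ 2) :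
    (regGraph 2 F).chromaticNumber ≤ ((2 * (Nat.card F + 1) : ℕ) : ℕ∞) := by
  obtain ⟨f, hf⟩ := Countable.exists_injective_nat (Fin 2 → F)
  have := Fintype.ofFinite (ℙ F (Fin 2 → F))
  have hcard : Fintype.card (ℙ F (Fin 2 → F) × Bool) = 2 * (Nat.card F + 1) := by
    rw [Fintype.card_prod, Fintype.card_bool, ← Nat.card_eq_fintype_card,
      Projectivization.card_of_finrank_two F _ (Module.finrank_fin_fun F), mul_comm]
  exact hcard ▸ (regGraphColoring hF hf).colorable.chromaticNumber_le

end Coloring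

/-- For `F` a finite field of odd order `q`, the chromatic number of the regular
graph on `SL₂(F)` (where `x ~ y` iff `det(x+y) = 0`) is at most `8(q+1)`. -/
theorem chromatic_regular_graph_upper {F : Type} [Field F] [Fintype F]
    (hodd : Odd (Fintype.card F)) :
    (regGraph 2 F).chromaticNumber ≤ ((8 * (Fintype.card F + 1) : ℕ) : ℕ∞) := by
  have hF : ringChar F ≠ 2 :=
    FiniteField.even_card_iff_char_two.not.mpr (Nat.odd_iff.mp hodd ▸ one_ne_zero)
  calc (regGraph 2 F).chromaticNumber ≤ ((2 * (Nat.card F + 1) : ℕ) : ℕ∞) :=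
        chromaticNumber_regGraph_two_le hF
    _ ≤ ((8 * (Fintype.card F + 1) : ℕ) : ℕ∞) := by
        rw [Nat.card_eq_fintype_card]; exact_mod_cast by omega
end

section
/- Let R be a commutative ring in which 2 is invertible. There exists a subset A of SL₂(R) such that the induced subgraph of the regular graph Γ (vertices SL₂(R), x ~ y iff det(x+y) = 0 and x ≠ y) on A is isomorphic to the hyperbola graph H(R) = Cay(R², {(x,y) : xy = 1}). -/
/-- The hyperbola graph `H(R) = Cay(R², {(x,y) : xy = 1})`:
`v ~ w` iff `v ≠ w` and `(w₁-v₁)(w₂-v₂) = 1`. -/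
def hgraph (R : Type) [CommRing R] : SimpleGraph (R × R) :=
  SimpleGraph.fromRel (fun v w => (w.1 - v.1) * (w.2 - v.2) = 1)

/-!
The matrices `a_{x,y} = [[1 - 4xy, -2x], [2y, 1]]` lie in `SL₂(R)` and satisfy
`det(a_{x₁,y₁} + a_{x₂,y₂}) = 4 - 4(x₂ - x₁)(y₂ - y₁)`. As `4` is a unit, this determinant
vanishes exactly when the two points are adjacent in `H(R)`, and as `2` is a unit,
`(x, y) ↦ a_{x,y}` is injective (read off the off-diagonal entries). So it is a graph embedding
of `H(R)` into the regular graph, and `H(R)` is isomorphic to the subgraph induced on its image.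
-/

namespace HyperbolaGraph

variable {R : Type} [CommRing R]

lemma hgraph_adj {v w : R × R} :
    (hgraph R).Adj v w ↔ v ≠ w ∧ (w.1 - v.1) * (w.2 - v.2) = 1 := by
  have hsymm : (v.1 - w.1) * (v.2 - w.2) = (w.1 - v.1) * (w.2 - v.2) := by ring
  simp only [hgraph, SimpleGraph.fromRel_adj, hsymm, or_self]

/-- The matrix `a_{x,y}` at `v = (x, y)`. -/
def hyperbolaMatrix (v : R × R) : Matrix.SpecialLinearGroup (Fin 2) R :=
  ⟨!![1 - 4 * v.1 * v.2, -(2 * v.1); 2 * v.2, 1], by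
    rw [Matrix.det_fin_two_of]; ring⟩

lemma hyperbolaMatrix_injective (h2 : IsUnit (2 : R)) :
    Function.Injective (hyperbolaMatrix (R := R)) := by
  intro v w h
  have h01 := congrArg (fun m : Matrix.SpecialLinearGroup (Fin 2) R => m 0 1) h
  have h10 := congrArg (fun m : Matrix.SpecialLinearGroup (Fin 2) R => m 1 0) h
  simp only [hyperbolaMatrix, Matrix.of_apply, Matrix.cons_val', Matrix.cons_val_zero,
    Matrix.cons_val_one, Matrix.empty_val', Matrix.cons_val_fin_one, neg_inj] at h01 h10
  exact Prod.ext (h2.mul_left_cancel h01) (h2.mul_left_cancel h10)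

lemma det_hyperbolaMatrix_add (v w : R × R) :
    ((hyperbolaMatrix v : Matrix (Fin 2) (Fin 2) R) + hyperbolaMatrix w).det
      = 4 - 4 * ((w.1 - v.1) * (w.2 - v.2)) := by
  simp only [hyperbolaMatrix, Matrix.det_fin_two, Matrix.add_apply, Matrix.of_apply,
    Matrix.cons_val_zero, Matrix.cons_val_one]
  ring

lemma det_hyperbolaMatrix_add_eq_zero_iff (h2 : IsUnit (2 : R)) (v w : R × R) :
    ((hyperbolaMatrix v : Matrix (Fin 2) (Fin 2) R) + hyperbolaMatrix w).det = 0 ↔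
      (w.1 - v.1) * (w.2 - v.2) = 1 := by
  have h4 : IsUnit (4 : R) := by simpa only [two_mul, two_add_two_eq_four] using h2.mul h2
  rw [det_hyperbolaMatrix_add, ← mul_one_sub, h4.mul_right_eq_zero, sub_eq_zero, eq_comm]

def hyperbolaEmbedding (h2 : IsUnit (2 : R)) : hgraph R ↪g regGraph 2 R where
  toFun := hyperbolaMatrix
  inj' := hyperbolaMatrix_injective h2
  map_rel_iff' {v w} :=
    ((hyperbolaMatrix_injective h2).ne_iff.and (det_hyperbolaMatrix_add_eq_zero_iff h2 v w)).trans
      hgraph_adj.symm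

end HyperbolaGraph

open HyperbolaGraph in
/-- If `2` is invertible in the commutative ring `R`, then the hyperbola graph
`H(R)` is isomorphic to an induced subgraph of the regular graph on `SL₂(R)`. -/
theorem hyperbola_embeds_in_regular_graph {R : Type} [CommRing R]
    (h2 : IsUnit (2 : R)) :
    ∃ A : Set (Matrix.SpecialLinearGroup (Fin 2) R),
      Nonempty (hgraph R ≃g (regGraph 2 R).induce A) :=
  ⟨_, ⟨(hyperbolaEmbedding h2).isoInduceRange⟩⟩
end

section
/- Let n ≥ 2 and let R be a commutative ring with a proper ideal 𝔞 such that 2 is not a zero divisor in R/𝔞. Then χ(Γ_n(R)) ≤ χ(Γ_n(R/𝔞)), where Γ_n(R) is the graph on SL_n(R) with x ~ y iff det(x+y)=0. -/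
theorem Matrix.SpecialLinearGroup.det_add_self {n : ℕ} {R : Type*} [CommRing R]
    (x : Matrix.SpecialLinearGroup (Fin n) R) :
    ((x : Matrix (Fin n) (Fin n) R) + x).det = 2 ^ n := by
  rw [← two_smul R (x : Matrix (Fin n) (Fin n) R), Matrix.det_smul, x.prop, mul_one,
    Fintype.card_fin]

namespace regGraph

variable {n : ℕ} {R S : Type} [CommRing R] [CommRing S]

theorem adj_iff_det_eq_zero [Nontrivial S] (h2 : IsLeftRegular (2 : S))
    {x y : Matrix.SpecialLinearGroup (Fin n) S} :
    (regGraph n S).Adj x y ↔ ((x : Matrix (Fin n) (Fin n) S) + y).det = 0 := by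
  refine ⟨And.right, fun hdet => ⟨?_, hdet⟩⟩
  rintro rfl
  exact (h2.pow n).ne_zero (x.det_add_self ▸ hdet)

def map [Nontrivial S] (f : R →+* S) (h2 : IsLeftRegular (2 : S)) :
    regGraph n R →g regGraph n S where
  toFun := Matrix.SpecialLinearGroup.map f
  map_rel' {x y} hxy := by
    rw [adj_iff_det_eq_zero h2, Matrix.SpecialLinearGroup.map_apply_coe,
      Matrix.SpecialLinearGroup.map_apply_coe, ← map_add, ← RingHom.map_det, hxy.2, map_zero]

end regGraph

theorem chromatic_regular_graph_quotient_general (n : ℕ)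
    {R : Type} [CommRing R] (𝔞 : Ideal R) (h𝔞 : 𝔞 ≠ ⊤)
    (h2 : ∀ x : R ⧸ 𝔞, 2 * x = 0 → x = 0) :
    (regGraph n R).chromaticNumber ≤ (regGraph n (R ⧸ 𝔞)).chromaticNumber := by
  have : Nontrivial (R ⧸ 𝔞) := Ideal.Quotient.nontrivial_iff.mpr h𝔞
  exact SimpleGraph.chromaticNumber_mono_of_hom
    (regGraph.map (Ideal.Quotient.mk 𝔞) (isLeftRegular_iff_right_eq_zero_of_mul.mpr h2))

/-- Let `n ≥ 2` and let `𝔞` be a proper ideal of a commutative ring `R` such that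
`2` is not a zero divisor in `R/𝔞`. Then `χ(Γ_n(R)) ≤ χ(Γ_n(R/𝔞))`. -/
theorem chromatic_regular_graph_quotient (n : ℕ) (hn : 2 ≤ n)
    {R : Type} [CommRing R] (𝔞 : Ideal R) (h𝔞 : 𝔞 ≠ ⊤)
    (h2 : ∀ x : R ⧸ 𝔞, 2 * x = 0 → x = 0) :
    (regGraph n R).chromaticNumber ≤ (regGraph n (R ⧸ 𝔞)).chromaticNumber :=
  chromatic_regular_graph_quotient_general n 𝔞 h𝔞 h2
end

section
/- Let G be a finite connected ℓ-regular loopless graph on n vertices with adjacency eigenvalues ℓ = λ₀ ≥ λ₁ ≥ … ≥ λ_{n−1}. If max(|λ₁|, |λ_{n−1}|) ≤ μ for some μ > 0, then χ(G) ≥ ℓ/μ. -/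
/-!
Hoffman's ratio bound. If every eigenvalue of the adjacency matrix `A` of an `ℓ`-regular
graph on `n` vertices is at least `-μ`, then `A + μ I` is positive semidefinite. Testing it
against `x = n 𝟙_S - |S| 𝟙` for an independent set `S` (so that `𝟙_Sᵀ A 𝟙_S = 0` and
`A 𝟙 = ℓ 𝟙`) gives `(ℓ + μ) |S| ≤ μ n`. Each colour class of a `c`-colouring is independent,
so `n ≤ c μ n / (ℓ + μ)`, i.e. `ℓ + μ ≤ c μ`.
-/

open Matrix Finset

namespace Matrix.IsHermitian

variable {n : Type*} [Fintype n] [DecidableEq n] {A : Matrix n n ℝ}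

theorem mul_dotProduct_self_le_dotProduct_mulVec (hA : A.IsHermitian) {m : ℝ}
    (hm : ∀ i, m ≤ hA.eigenvalues i) (x : n → ℝ) : m * (x ⬝ᵥ x) ≤ x ⬝ᵥ A *ᵥ x := by
  have hpsd : (A - algebraMap ℝ _ m).PosSemidef := by
    rw [posSemidef_iff_isHermitian_and_spectrum_nonneg]
    refine ⟨hA.sub (by simp [IsHermitian, algebraMap_eq_diagonal]), ?_⟩
    rw [← spectrum.sub_singleton_eq, hA.spectrum_real_eq_range_eigenvalues]
    rintro _ ⟨_, ⟨i, rfl⟩, _, rfl, rfl⟩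
    exact sub_nonneg.2 (hm i)
  simpa [sub_mulVec, Algebra.algebraMap_eq_smul_one, smul_mulVec] using
    hpsd.dotProduct_mulVec_nonneg x

end Matrix.IsHermitian

namespace SimpleGraph

variable {V : Type*} [Fintype V] {G : SimpleGraph V}

theorem Coloring.card_le_nsmul_of_forall_isIndepSet {R : Type*} [AddCommMonoidWithOne R]
    [PartialOrder R] [IsOrderedAddMonoid R] {α : Type*} [Fintype α] [DecidableEq α]
    (C : G.Coloring α) {t : R} (ht : ∀ S : Finset V, G.IsIndepSet S → (#S : R) ≤ t) :
    (Fintype.card V : R) ≤ Fintype.card α • t :=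
  calc (Fintype.card V : R) = ∑ a, (#{v | C v = a} : R) := by
        rw [← Nat.cast_sum, ← card_eq_sum_card_fiberwise fun v _ => mem_univ (C v), card_univ]
    _ ≤ ∑ _a : α, t := sum_le_sum fun a _ =>
        ht _ (by simpa [Coloring.colorClass] using C.isIndepSet_colorClass a)
    _ = Fintype.card α • t := by rw [sum_const, card_univ]

variable [DecidableRel G.Adj]

theorem IsIndepSet.dotProduct_adjMatrix_mulVec_eq_zero {S : Set V} [DecidablePred (· ∈ S)]
    (hS : G.IsIndepSet S) : S.indicator 1 ⬝ᵥ G.adjMatrix ℝ *ᵥ S.indicator 1 = 0 := by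
  rw [dotProduct_mulVec_adjMatrix]
  refine sum_eq_zero fun u _ => sum_eq_zero fun v _ => ?_
  by_cases hu : u ∈ S <;> by_cases hv : v ∈ S <;> simp [hu, hv]
  exact fun h => hS hu hv h.ne h

theorem IsRegularOfDegree.add_mul_card_le_of_isIndepSet {ℓ : ℕ}
    (hreg : G.IsRegularOfDegree ℓ) {μ : ℝ} (hμ : 0 ≤ μ)
    (hmin : ∀ x : V → ℝ, -μ * (x ⬝ᵥ x) ≤ x ⬝ᵥ G.adjMatrix ℝ *ᵥ x)
    {S : Finset V} (hS : G.IsIndepSet S) :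
    (ℓ + μ) * #S ≤ μ * Fintype.card V := by
  classical
  set n : ℝ := (Fintype.card V : ℝ)
  set s : ℝ := (#S : ℝ)
  set y : V → ℝ := (S : Set V).indicator 1
  have hA1 : G.adjMatrix ℝ *ᵥ 1 = (ℓ : ℝ) • (1 : V → ℝ) := by
    ext v
    simpa using adjMatrix_mulVec_const_apply_of_regular hreg (a := (1 : ℝ)) (v := v)
  have hy1 : y ⬝ᵥ 1 = s := by simp [y, s, dotProduct, Set.indicator_apply]
  have hyy : y ⬝ᵥ y = s := by simp [y, s, dotProduct, Set.indicator_apply]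
  have h11 : (1 : V → ℝ) ⬝ᵥ 1 = n := by simp [n]
  have hyAy : y ⬝ᵥ G.adjMatrix ℝ *ᵥ y = 0 := hS.dotProduct_adjMatrix_mulVec_eq_zero
  have h1Ay : 1 ⬝ᵥ G.adjMatrix ℝ *ᵥ y = ℓ * s := by
    rw [dotProduct_mulVec, ← mulVec_transpose, transpose_adjMatrix, hA1, smul_dotProduct,
      dotProduct_comm, hy1, smul_eq_mul]
  have key := hmin (n • y - s • 1)
  simp only [mulVec_sub, mulVec_smul, dotProduct_sub, sub_dotProduct, dotProduct_smul,
    smul_dotProduct, hA1, hyAy, h1Ay, hy1, hyy, h11, dotProduct_comm 1 y, smul_eq_mul] at key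
  obtain hs | hs := (show 0 ≤ s by positivity).eq_or_lt
  · rw [← hs, mul_zero]; positivity
  have hn : 0 < n := hs.trans_le (Nat.cast_le.2 S.card_le_univ)
  nlinarith [mul_pos hn hs]

end SimpleGraph

theorem chromatic_ge_of_spectral_gap_general {V : Type} [Fintype V]
    (G : SimpleGraph V) [DecidableRel G.Adj]
    (ℓ : ℕ) (hreg : G.IsRegularOfDegree ℓ) (hconn : G.Connected)
    (μ : ℝ) (hμ : 0 < μ)
    (heig : ∀ l : ℝ,
      (∃ x : V → ℝ, x ≠ 0 ∧ (G.adjMatrix ℝ).mulVec x = l • x) → l ≠ ℓ → |l| ≤ μ) :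
    ∀ c : ℕ, G.Colorable c → (ℓ : ℝ) / μ ≤ c := by
  classical
  rintro c ⟨C⟩
  have hA := G.isHermitian_adjMatrix ℝ
  have hmin : ∀ x : V → ℝ, -μ * (x ⬝ᵥ x) ≤ x ⬝ᵥ G.adjMatrix ℝ *ᵥ x := by
    refine hA.mul_dotProduct_self_le_dotProduct_mulVec fun i => ?_
    by_cases hi : hA.eigenvalues i = ℓ
    · exact hi ▸ (neg_nonpos.2 hμ.le).trans ℓ.cast_nonneg
    · refine neg_le_of_abs_le (heig _ ⟨_, ?_, hA.mulVec_eigenvectorBasis i⟩ hi)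
      exact (WithLp.ofLp_eq_zero 2).ne.2 (hA.eigenvectorBasis.orthonormal.ne_zero i)
  have hα : ∀ S : Finset V, G.IsIndepSet S → (#S : ℝ) ≤ μ * Fintype.card V / (ℓ + μ) :=
    fun S hS => (le_div_iff₀' (by positivity)).2
      (hreg.add_mul_card_le_of_isIndepSet hμ.le hmin hS)
  have hχ := C.card_le_nsmul_of_forall_isIndepSet hα
  have hn : (0 : ℝ) < Fintype.card V := by have := hconn.nonempty; positivity
  rw [Fintype.card_fin, nsmul_eq_mul, ← mul_div_assoc, le_div_iff₀ (by positivity)] at hχ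
  rw [div_le_iff₀ hμ]
  nlinarith

/-- **Spectral lower bound for the chromatic number.** If `G` is a finite connected
`ℓ`-regular (loopless) graph all of whose adjacency eigenvalues other than `ℓ` have
absolute value at most `μ > 0`, then `χ(G) ≥ ℓ/μ`. -/
theorem chromatic_ge_of_spectral_gap {V : Type} [Fintype V] [DecidableEq V]
    (G : SimpleGraph V) [DecidableRel G.Adj]
    (ℓ : ℕ) (hreg : G.IsRegularOfDegree ℓ) (hconn : G.Connected)
    (μ : ℝ) (hμ : 0 < μ)
    (heig : ∀ l : ℝ,
      (∃ x : V → ℝ, x ≠ 0 ∧ (G.adjMatrix ℝ).mulVec x = l • x) → l ≠ ℓ → |l| ≤ μ) :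
    ∀ c : ℕ, G.Colorable c → (ℓ : ℝ) / μ ≤ c :=
  chromatic_ge_of_spectral_gap_general G ℓ hreg hconn μ hμ heig
end
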